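/- arXiv:1207.4104 — 3 statements merged into one kernel-verified Lean document; each statement's English description precedes it below -/
import Mathlib

section
/- Let H be a fixed real n×m matrix with n ≥ m, and let k ≤ n. Then the following are equivalent: (i) for every x ∈ ℝ^m and every e ∈ ℝ^n with at most k nonzero entries, x is the unique minimizer of z ↦ ‖(Hx + e) − Hz‖₁ over z ∈ ℝ^m; (ii) for every nonzero z ∈ ℝ^m and every subset K ⊆ {1,…,n} with |K| = k, one has ‖(Hz)_K‖₁ < ‖(Hz)_{K̄}‖₁, where K̄ = {1,…,n} \ K. -/
open MeasureTheory ProbabilityTheory Finset Filter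

noncomputable section

/-- The `n × m` Toeplitz matrix built from the input sequence
`h = (h_{-m+2}, …, h_n)`, reindexed as `h : Fin (n+m-1) → ℝ`;
the `(i,j)` entry (0-based) is the input with index `i + j`, which corresponds to
`H_{i,j} = h_{i-m+j}` in 1-based indexing. -/
def toeplitz (n m : ℕ) (h : Fin (n + m - 1) → ℝ) : Matrix (Fin n) (Fin m) ℝ :=
  fun i j => h ⟨i.1 + j.1, by have := i.2; have := j.2; omega⟩

/-- The ℓ¹ norm of a vector in `ℝ^k`. -/
def l1 {k : ℕ} (v : Fin k → ℝ) : ℝ := ∑ i, |v i|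

/-- The Euclidean (ℓ²) norm of a vector in `ℝ^k`. -/
def l2 {k : ℕ} (v : Fin k → ℝ) : ℝ := Real.sqrt (∑ i, (v i) ^ 2)

/-- Product of `d` i.i.d. standard Gaussian `N(0,1)` measures on `ℝ^d`. -/
def gaussPi (d : ℕ) : Measure (Fin d → ℝ) := Measure.pi fun _ => gaussianReal 0 1

/-- The standard Gaussian cumulative distribution function `Φ`. -/
def stdGaussianCDF (t : ℝ) : ℝ :=
  (Real.sqrt (2 * Real.pi))⁻¹ * ∫ x in Set.Iic t, Real.exp (-x ^ 2 / 2)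

open Classical in
/-- Number of nonzero entries of a vector. -/
def sparsity {k : ℕ} (v : Fin k → ℝ) : ℕ := (Finset.univ.filter fun i => v i ≠ 0).card

/-! Write the residual as `e - H w` with `w = z - x`. If `e` vanishes off `K`, the reverse
triangle inequality on `K` gives `‖e - Hw‖₁ ≥ ‖e‖₁ - ‖(Hw)_K‖₁ + ‖(Hw)_{K̄}‖₁`, so the balance
condition makes `x` the strict minimiser. Conversely, `x = 0` and `e = (Hz)_K` turn strict
minimality at `z` into `‖(Hz)_K‖₁ < ‖(Hz)_{K̄}‖₁`. -/

theorem l1_eq_sum_add_sum_compl {n : ℕ} (v : Fin n → ℝ) (K : Finset (Fin n)) :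
    l1 v = ∑ i ∈ K, |v i| + ∑ i ∈ Kᶜ, |v i| :=
  (sum_add_sum_compl K _).symm

theorem l1_lt_l1_sub_of_eq_zero_off {n : ℕ} {e w : Fin n → ℝ} {K : Finset (Fin n)}
    (he : ∀ i ∉ K, e i = 0) (hw : ∑ i ∈ K, |w i| < ∑ i ∈ Kᶜ, |w i|) : l1 e < l1 (e - w) := by
  rw [l1_eq_sum_add_sum_compl e K, l1_eq_sum_add_sum_compl (e - w) K]
  have e_off_K : ∑ i ∈ Kᶜ, |e i| = 0 :=
    sum_eq_zero fun i hi => by simp [he i (mem_compl.1 hi)]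
  have residual_off_K : ∑ i ∈ Kᶜ, |(e - w) i| = ∑ i ∈ Kᶜ, |w i| :=
    sum_congr rfl fun i hi => by simp [he i (mem_compl.1 hi)]
  have residual_on_K : ∑ i ∈ K, |e i| - ∑ i ∈ K, |w i| ≤ ∑ i ∈ K, |(e - w) i| := by
    rw [← sum_sub_distrib]
    exact sum_le_sum fun i _ => abs_sub_abs_le_abs_sub _ _
  linarith

theorem l1_indicator {n : ℕ} (v : Fin n → ℝ) (K : Finset (Fin n)) :
    l1 ((K : Set (Fin n)).indicator v) = ∑ i ∈ K, |v i| := by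
  have on_K : ∑ i ∈ K, |(K : Set (Fin n)).indicator v i| = ∑ i ∈ K, |v i| :=
    sum_congr rfl fun i hi => by rw [Set.indicator_of_mem (mem_coe.2 hi)]
  have off_K : ∑ i ∈ Kᶜ, |(K : Set (Fin n)).indicator v i| = 0 :=
    sum_eq_zero fun i hi => by
      rw [Set.indicator_of_notMem (mt mem_coe.1 (mem_compl.1 hi)), abs_zero]
  rw [l1_eq_sum_add_sum_compl _ K, on_K, off_K, add_zero]

theorem l1_indicator_sub {n : ℕ} (v : Fin n → ℝ) (K : Finset (Fin n)) :
    l1 ((K : Set (Fin n)).indicator v - v) = ∑ i ∈ Kᶜ, |v i| := by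
  rw [← l1_indicator, coe_compl, Set.indicator_compl]
  simp only [l1, Pi.sub_apply, abs_sub_comm]

theorem sparsity_indicator_le {n : ℕ} (v : Fin n → ℝ) (K : Finset (Fin n)) :
    sparsity ((K : Set (Fin n)).indicator v) ≤ K.card := by
  classical
  refine card_le_card fun i hi => ?_
  by_contra hiK
  exact (mem_filter.1 hi).2 (Set.indicator_of_notMem (mt mem_coe.1 hiK) v)

theorem exists_card_eq_of_sparsity_le {n k : ℕ} {e : Fin n → ℝ} (he : sparsity e ≤ k)
    (hkn : k ≤ n) :
    ∃ K : Finset (Fin n), K.card = k ∧ ∀ i ∉ K, e i = 0 := by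
  classical
  obtain ⟨K, hsupp, -, hK⟩ := exists_subsuperset_card_eq (subset_univ _) he (by simpa using hkn)
  refine ⟨K, hK, fun i hi => ?_⟩
  by_contra h
  exact hi (hsupp (by simp [h]))

theorem stmt1_general (n m k : ℕ) (hkn : k ≤ n)
    (H : Matrix (Fin n) (Fin m) ℝ) :
    (∀ x : Fin m → ℝ, ∀ e : Fin n → ℝ, sparsity e ≤ k →
      ∀ z : Fin m → ℝ, z ≠ x →
        l1 (H.mulVec x + e - H.mulVec x) < l1 (H.mulVec x + e - H.mulVec z)) ↔
    (∀ z : Fin m → ℝ, z ≠ 0 → ∀ K : Finset (Fin n), K.card = k →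
      ∑ i ∈ K, |H.mulVec z i| < ∑ i ∈ Kᶜ, |H.mulVec z i|) := by
  have residual : ∀ (x z : Fin m → ℝ) (e : Fin n → ℝ),
      H.mulVec x + e - H.mulVec z = e - H.mulVec (z - x) := fun x z e => by
    rw [Matrix.mulVec_sub]; abel
  constructor
  · intro hrec z hz K hK
    have h := hrec 0 ((K : Set (Fin n)).indicator (H.mulVec z))
      ((sparsity_indicator_le _ K).trans hK.le) z hz
    rwa [residual, residual, sub_self, Matrix.mulVec_zero, sub_zero, sub_zero, l1_indicator,
      l1_indicator_sub] at h
  · intro hbal x e hsp z hzx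
    obtain ⟨K, hK, he⟩ := exists_card_eq_of_sparsity_le hsp hkn
    rw [residual, residual, sub_self, Matrix.mulVec_zero, sub_zero]
    exact l1_lt_l1_sub_of_eq_zero_off he (hbal (z - x) (sub_ne_zero.2 hzx) K hK)

/-- For a fixed matrix `H`, exact ℓ¹ recovery of every `x` from up to
`k` outliers is equivalent to the null-space-type balance condition
`‖(Hz)_K‖₁ < ‖(Hz)_{K̄}‖₁` for all nonzero `z` and all `K` of cardinality `k`. -/
theorem stmt1 (n m k : ℕ) (hmn : m ≤ n) (hkn : k ≤ n)
    (H : Matrix (Fin n) (Fin m) ℝ) :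
    (∀ x : Fin m → ℝ, ∀ e : Fin n → ℝ, sparsity e ≤ k →
      ∀ z : Fin m → ℝ, z ≠ x →
        l1 (H.mulVec x + e - H.mulVec x) < l1 (H.mulVec x + e - H.mulVec z)) ↔
    (∀ z : Fin m → ℝ, z ≠ 0 → ∀ K : Finset (Fin n), K.card = k →
      ∑ i ∈ K, |H.mulVec z i| < ∑ i ∈ Kᶜ, |H.mulVec z i|) :=
  stmt1_general n m k hkn H
end
end

section
/- Let X ~ N(0, σ²) be a centered Gaussian random variable with standard deviation σ > 0, let t > 0, and let l ∈ ℝ. Then E[|l + tX| − |l|] = √(2/π) · tσ · e^{−l²/(2t²σ²)} − 2|l|(1 − Φ(|l|/(tσ))), where Φ is the standard Gaussian CDF. Moreover this quantity is nonnegative and is a nonincreasing function of |l|. -/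
open MeasureTheory ProbabilityTheory Finset Filter

noncomputable section

/-! Rescaling reduces the claim to a standard Gaussian `U` and `s = tσ`. Averaging the integrand
at `U` and `-U` turns `|l + sU| - |l|` into `(s|U| - |l|)⁺`, which vanishes for `|U| ≤ |l|/s`;
the remaining tail integral is explicit because the standard density `φ` satisfies `φ' = -uφ`.
Nonnegativity and monotonicity in `|l|` are visible on `E[(s|U| - |l|)⁺]`. -/

open Real Set Filter Topology

lemma gaussianPDFReal_zero_one (x : ℝ) :
    gaussianPDFReal 0 1 x = (√(2 * π))⁻¹ * exp (-x ^ 2 / 2) := by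
  simp [gaussianPDFReal_def]

lemma gaussianPDFReal_zero_one_abs (x : ℝ) : gaussianPDFReal 0 1 |x| = gaussianPDFReal 0 1 x := by
  simp only [gaussianPDFReal_zero_one, sq_abs]

lemma two_mul_gaussianPDFReal_zero_one (x : ℝ) :
    2 * gaussianPDFReal 0 1 x = √(2 / π) * exp (-x ^ 2 / 2) := by
  have h : √(2 / π) * √(2 * π) = 2 := by
    rw [← Real.sqrt_mul (by positivity), show 2 / π * (2 * π) = 2 ^ 2 by field_simp]
    exact sqrt_sq zero_le_two
  rw [gaussianPDFReal_zero_one]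
  nth_rewrite 1 [← h]
  field_simp

lemma stdGaussianCDF_eq_setIntegral_gaussianPDFReal (s : ℝ) :
    stdGaussianCDF s = ∫ x in Iic s, gaussianPDFReal 0 1 x := by
  simp only [stdGaussianCDF, gaussianPDFReal_zero_one, integral_const_mul]

lemma setIntegral_Ioi_gaussianPDFReal_zero_one (s : ℝ) :
    ∫ x in Ioi s, gaussianPDFReal 0 1 x = 1 - stdGaussianCDF s := by
  have h := intervalIntegral.integral_Iic_add_Ioi (b := s)
    (integrable_gaussianPDFReal 0 1).integrableOn (integrable_gaussianPDFReal 0 1).integrableOn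
  rw [integral_gaussianPDFReal_eq_one 0 one_ne_zero,
    ← stdGaussianCDF_eq_setIntegral_gaussianPDFReal] at h
  linarith

lemma hasDerivAt_gaussianPDFReal_zero_one (x : ℝ) :
    HasDerivAt (gaussianPDFReal 0 1) (-x * gaussianPDFReal 0 1 x) x := by
  have h : HasDerivAt (fun y : ℝ => -y ^ 2 / 2) (-x) x :=
    ((hasDerivAt_pow 2 x).neg.div_const 2).congr_deriv (by ring)
  rw [funext gaussianPDFReal_zero_one]
  exact (h.exp.const_mul _).congr_deriv (by ring)

lemma tendsto_gaussianPDFReal_zero_one_atTop :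
    Tendsto (gaussianPDFReal 0 1) atTop (𝓝 0) := by
  rw [funext gaussianPDFReal_zero_one, ← mul_zero (√(2 * π))⁻¹]
  refine (tendsto_exp_atBot.comp ?_).const_mul _
  exact (tendsto_neg_atTop_atBot.comp (tendsto_pow_atTop two_ne_zero)).atBot_div_const two_pos

lemma integrable_mul_gaussianPDFReal_zero_one :
    Integrable fun x : ℝ => x * gaussianPDFReal 0 1 x := by
  simp only [gaussianPDFReal_zero_one]
  convert (integrable_mul_exp_neg_mul_sq (one_half_pos (α := ℝ))).const_mul (√(2 * π))⁻¹
    using 2 with x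
  ring_nf

lemma setIntegral_Ioi_mul_gaussianPDFReal_zero_one (b : ℝ) :
    ∫ x in Ioi b, x * gaussianPDFReal 0 1 x = gaussianPDFReal 0 1 b := by
  have h := integral_Ioi_of_hasDerivAt_of_tendsto' (a := b)
    (fun x _ => (hasDerivAt_gaussianPDFReal_zero_one x).neg)
    (by simpa using integrable_mul_gaussianPDFReal_zero_one.integrableOn)
    tendsto_gaussianPDFReal_zero_one_atTop.neg
  simpa using h

lemma integral_max_mul_abs_sub_gaussianReal {a c : ℝ} (ha : 0 < a) (hc : 0 ≤ c) :
    ∫ x, max (a * |x| - c) 0 ∂gaussianReal 0 1 =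
      2 * a * gaussianPDFReal 0 1 (c / a) - 2 * c * (1 - stdGaussianCDF (c / a)) := by
  set b := c / a
  have hb : 0 ≤ b := div_nonneg hc ha.le
  have hab : a * b = c := mul_div_cancel₀ c ha.ne'
  let g : ℝ → ℝ := fun x => gaussianPDFReal 0 1 x * max (a * x - c) 0
  have hg : EqOn g (fun x => a * (x * gaussianPDFReal 0 1 x) - c * gaussianPDFReal 0 1 x)
      (Ioi b) := by
    intro x hx
    simp only [g, max_eq_left (show 0 ≤ a * x - c by nlinarith [hx.out])]
    ring
  calc ∫ x, max (a * |x| - c) 0 ∂gaussianReal 0 1 = ∫ x, g |x| := by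
        rw [integral_gaussianReal_eq_integral_smul one_ne_zero]
        simp only [g, smul_eq_mul, gaussianPDFReal_zero_one_abs]
    _ = 2 * ∫ x in Ioi 0, g x := integral_comp_abs
    _ = 2 * ∫ x in Ioi b, g x := by
        rw [setIntegral_eq_of_subset_of_forall_sdiff_eq_zero measurableSet_Ioi
          (Ioi_subset_Ioi hb)]
        rintro x ⟨-, hx⟩
        rw [Set.mem_Ioi, not_lt] at hx
        simp only [g, max_eq_right (show a * x - c ≤ 0 by nlinarith), mul_zero]
    _ = 2 * (a * gaussianPDFReal 0 1 b - c * (1 - stdGaussianCDF b)) := by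
        rw [setIntegral_congr_fun measurableSet_Ioi hg,
          integral_sub (integrable_mul_gaussianPDFReal_zero_one.integrableOn.const_mul a)
            ((integrable_gaussianPDFReal 0 1).integrableOn.const_mul c),
          integral_const_mul, integral_const_mul, setIntegral_Ioi_mul_gaussianPDFReal_zero_one,
          setIntegral_Ioi_gaussianPDFReal_zero_one]
    _ = _ := by ring

lemma abs_add_sub_abs_add_abs_sub_sub_abs (l w : ℝ) :
    (|l + w| - |l|) + (|l - w| - |l|) = 2 * max (|w| - |l|) 0 := by
  rcases abs_cases l with ⟨h1, h1'⟩ | ⟨h1, h1'⟩ <;>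
    rcases abs_cases w with ⟨h2, h2'⟩ | ⟨h2, h2'⟩ <;>
    rcases abs_cases (l + w) with ⟨h3, h3'⟩ | ⟨h3, h3'⟩ <;>
    rcases abs_cases (l - w) with ⟨h4, h4'⟩ | ⟨h4, h4'⟩ <;>
    rcases max_cases (|w| - |l|) 0 with ⟨h5, h5'⟩ | ⟨h5, h5'⟩ <;>
    rw [h5] <;> linarith

lemma integral_abs_add_sub_abs_of_map_neg {μ : Measure ℝ} (hμ : μ.map (fun x => -x) = μ)
    (hint : Integrable id μ) (l a : ℝ) :
    ∫ x, (|l + a * x| - |l|) ∂μ = ∫ x, max (|a * x| - |l|) 0 ∂μ := by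
  have hint_shift : ∀ b : ℝ, Integrable (fun x => |l + b * x| - |l|) μ := fun b =>
    (hint.abs.const_mul |b|).mono' (by fun_prop) (Eventually.of_forall fun x => by
      simpa [abs_mul] using abs_abs_sub_abs_le_abs_sub (l + b * x) l)
  have hneg : ∫ x, (|l - a * x| - |l|) ∂μ = ∫ x, (|l + a * x| - |l|) ∂μ := by
    conv_rhs => rw [← hμ]
    rw [integral_map (by fun_prop) (by fun_prop)]
    congr 1 with x
    rw [mul_neg, ← sub_eq_add_neg]
  have hsum : ∫ x, ((|l + a * x| - |l|) + (|l - a * x| - |l|)) ∂μ =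
      ∫ x, (|l + a * x| - |l|) ∂μ + ∫ x, (|l - a * x| - |l|) ∂μ :=
    integral_add (hint_shift a) (by simpa [sub_eq_add_neg] using hint_shift (-a))
  simp_rw [abs_add_sub_abs_add_abs_sub_sub_abs, integral_const_mul, hneg] at hsum
  linarith

lemma integral_gaussianReal_sq_eq_integral_comp_mul {E : Type*} [NormedAddCommGroup E]
    [NormedSpace ℝ E] {σ : ℝ} (hσ : σ ≠ 0) (f : ℝ → E) :
    ∫ x, f x ∂gaussianReal 0 (σ ^ 2).toNNReal = ∫ u, f (σ * u) ∂gaussianReal 0 1 := by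
  have hmap : (gaussianReal 0 1).map (σ * ·) = gaussianReal 0 (σ ^ 2).toNNReal := by
    rw [gaussianReal_map_const_mul, mul_zero, mul_one, Real.toNNReal_of_nonneg (sq_nonneg σ)]
  rw [← hmap, (measurableEmbedding_mulLeft₀ hσ).integral_map]

/-- For `X ~ N(0,σ²)` with `σ > 0`, `t > 0` and `l ∈ ℝ`,
`E[|l + tX| - |l|] = √(2/π)·tσ·e^{-l²/(2t²σ²)} - 2|l|(1 - Φ(|l|/(tσ)))`; moreover this
quantity is nonnegative and nonincreasing in `|l|`. -/
theorem stmt16 (σ t : ℝ) (hσ : 0 < σ) (ht : 0 < t) :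
    (∀ l : ℝ,
      (∫ x, (|l + t * x| - |l|) ∂ gaussianReal 0 (Real.toNNReal (σ ^ 2))) =
        Real.sqrt (2 / Real.pi) * t * σ * Real.exp (-l ^ 2 / (2 * t ^ 2 * σ ^ 2)) -
          2 * |l| * (1 - stdGaussianCDF (|l| / (t * σ)))) ∧
    (∀ l : ℝ,
      0 ≤ ∫ x, (|l + t * x| - |l|) ∂ gaussianReal 0 (Real.toNNReal (σ ^ 2))) ∧
    (∀ l₁ l₂ : ℝ, |l₁| ≤ |l₂| →
      (∫ x, (|l₂ + t * x| - |l₂|) ∂ gaussianReal 0 (Real.toNNReal (σ ^ 2))) ≤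
        ∫ x, (|l₁ + t * x| - |l₁|) ∂ gaussianReal 0 (Real.toNNReal (σ ^ 2))) := by
  have hs : 0 < t * σ := mul_pos ht hσ
  have hreduce : ∀ l : ℝ, ∫ x, (|l + t * x| - |l|) ∂gaussianReal 0 (σ ^ 2).toNNReal =
      ∫ u, max (t * σ * |u| - |l|) 0 ∂gaussianReal 0 1 := fun l => by
    simp_rw [integral_gaussianReal_sq_eq_integral_comp_mul hσ.ne', ← mul_assoc]
    rw [integral_abs_add_sub_abs_of_map_neg
      (by simpa using gaussianReal_map_neg (μ := 0) (v := 1)) IsGaussian.integrable_id]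
    simp only [abs_mul, abs_of_pos hs]
  have hint : ∀ c : ℝ, Integrable (fun u => max (t * σ * |u| - c) 0) (gaussianReal 0 1) :=
    fun c => ((IsGaussian.integrable_id.abs.const_mul _).sub (integrable_const c)).pos_part
  refine ⟨fun l => ?_, fun l => ?_, fun l₁ l₂ hl => ?_⟩
  · rw [hreduce, integral_max_mul_abs_sub_gaussianReal hs (abs_nonneg l), mul_comm 2 (t * σ),
      mul_assoc, two_mul_gaussianPDFReal_zero_one, div_pow, sq_abs]
    congr 1
    field_simp
  · rw [hreduce]
    exact integral_nonneg fun u => le_max_right _ _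
  · rw [hreduce, hreduce]
    exact integral_mono (hint _) (hint _) fun u => max_le_max (by linarith) le_rfl
end
end

section
/- Let X ~ N(0,1) be a standard Gaussian random variable, let t > 0, and let l ∈ ℝ with |l| ≤ t. Then E[|l + tX| − |l|] ≥ 0.1666·t. (Indeed E[|l + tX| − |l|] ≥ √(2/π) t e^{−1/2} − 2t(1 − Φ(1)), and √(2/π) e^{−1/2} − 2(1 − Φ(1)) ≥ 0.1666.) -/
open MeasureTheory ProbabilityTheory Finset Filter

noncomputable section

/-!
For `l ≥ 0` (the case `l < 0` follows from the symmetry `X ↦ -X`) one has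
`|l + tX| - |l| = tX + 2 (l + tX)⁻`, where the mean-zero term `tX` integrates to `0`, and
`(l + tX)⁻ ≥ t (1 + X)⁻` because `l ≤ t`. Hence the expectation is at least
`2t E[(X - 1)⁺] = 2t (φ(1) - (1 - Φ(1))) ≈ 0.16663 t`. The margin is below `10⁻⁴`, so `Φ(1)` is
needed to five digits; it comes from integrating a Taylor lower bound for `exp (-x ^ 2 / 2)`
over `[0, 1]`.
-/

open Real Set

theorem integral_abs_add_mul_sub_abs_ge {μ : Measure ℝ} [IsFiniteMeasure μ]
    (hμ : Integrable id μ) (hmean : ∫ x, x ∂μ = 0) {l t : ℝ} (hl : 0 ≤ l) (hlt : l ≤ t) :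
    2 * t * ∫ x, max (-(1 + x)) 0 ∂μ ≤ ∫ x, (|l + t * x| - |l|) ∂μ := by
  have hmul : Integrable (fun x => t * x) μ := hμ.const_mul t
  have hneg_int : Integrable (fun x => max (-(l + t * x)) 0) μ :=
    ((integrable_const l).add hmul).neg.pos_part
  have hneg : ∀ x, t * max (-(1 + x)) 0 ≤ max (-(l + t * x)) 0 := fun x => by
    rw [mul_max_of_nonneg _ _ (hl.trans hlt), mul_zero]
    exact max_le_max_right 0 (by nlinarith)
  have habs : ∀ x, |l + t * x| - |l| = t * x + 2 * max (-(l + t * x)) 0 := fun x => by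
    rw [abs_of_nonneg hl]
    rcases le_total 0 (l + t * x) with h | h
    · rw [abs_of_nonneg h, max_eq_right (by linarith)]; ring
    · rw [abs_of_nonpos h, max_eq_left (by linarith)]; ring
  calc 2 * t * ∫ x, max (-(1 + x)) 0 ∂μ = ∫ x, 2 * (t * max (-(1 + x)) 0) ∂μ := by
        rw [integral_const_mul, integral_const_mul, mul_assoc]
    _ ≤ ∫ x, 2 * max (-(l + t * x)) 0 ∂μ := by
        refine integral_mono ?_ ?_ fun x => by gcongr; exact hneg x
        · exact ((((integrable_const 1).add hμ).neg.pos_part).const_mul t).const_mul 2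
        · exact hneg_int.const_mul 2
    _ = ∫ x, (|l + t * x| - |l|) ∂μ := by
        simp only [habs]
        rw [integral_add hmul (hneg_int.const_mul 2), integral_const_mul, integral_const_mul,
          hmean, mul_zero, zero_add]

theorem integral_comp_neg_gaussianReal {E : Type*} [NormedAddCommGroup E] [NormedSpace ℝ E]
    (v : NNReal) (f : ℝ → E) : ∫ x, f (-x) ∂gaussianReal 0 v = ∫ x, f x ∂gaussianReal 0 v := by
  have h : ∫ y, f y ∂(gaussianReal 0 v).map (fun x => -x) = ∫ x, f (-x) ∂gaussianReal 0 v :=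
    (MeasurableEquiv.neg ℝ).measurableEmbedding.integral_map f
  rwa [gaussianReal_map_neg, neg_zero, eq_comm] at h

theorem integrable_exp_neg_sq_div_two : Integrable fun x : ℝ => exp (-x ^ 2 / 2) := by
  simpa [neg_div, div_eq_inv_mul] using integrable_exp_neg_mul_sq (b := 1 / 2) (by norm_num)

theorem integrable_mul_exp_neg_sq_div_two : Integrable fun x : ℝ => x * exp (-x ^ 2 / 2) := by
  simpa [neg_div, div_eq_inv_mul] using integrable_mul_exp_neg_mul_sq (b := 1 / 2) (by norm_num)

theorem integral_Ioi_mul_exp_neg_sq_div_two (a : ℝ) :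
    ∫ x in Ioi a, x * exp (-x ^ 2 / 2) = exp (-a ^ 2 / 2) := by
  have hderiv (x : ℝ) (_ : x ∈ Ici a) :
      HasDerivAt (fun y => -exp (-y ^ 2 / 2)) (x * exp (-x ^ 2 / 2)) x := by
    refine ((hasDerivAt_pow 2 x).fun_neg.div_const 2).exp.fun_neg.congr_deriv ?_
    push_cast; ring
  have hlim : Tendsto (fun y : ℝ => -exp (-y ^ 2 / 2)) atTop (nhds (-0)) := by
    simp_rw [neg_div]
    exact (tendsto_exp_neg_atTop_nhds_zero.comp
      ((tendsto_pow_atTop two_ne_zero).atTop_div_const two_pos)).neg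
  rw [integral_Ioi_of_hasDerivAt_of_tendsto' hderiv
    integrable_mul_exp_neg_sq_div_two.integrableOn hlim]
  ring

theorem integral_Ioi_exp_neg_sq_div_two (a : ℝ) :
    ∫ x in Ioi a, exp (-x ^ 2 / 2) = √(2 * π) / 2 - ∫ x in 0..a, exp (-x ^ 2 / 2) := by
  have hhalf : ∫ x in Ioi 0, exp (-x ^ 2 / 2) = √(2 * π) / 2 := by
    simpa [neg_div, div_eq_inv_mul] using integral_gaussian_Ioi (1 / 2)
  rw [← hhalf, ← intervalIntegral.integral_Ioi_sub_Ioi' integrable_exp_neg_sq_div_two.integrableOn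
    integrable_exp_neg_sq_div_two.integrableOn]
  ring

theorem integral_max_sub_gaussianReal (a : ℝ) :
    ∫ x, max (x - a) 0 ∂gaussianReal 0 1 =
      (√(2 * π))⁻¹ * (exp (-a ^ 2 / 2) - a * ∫ x in Ioi a, exp (-x ^ 2 / 2)) := by
  have hind (x : ℝ) : gaussianPDFReal 0 1 x • max (x - a) 0 = (Ioi a).indicator
      (fun x => (√(2 * π))⁻¹ * (x * exp (-x ^ 2 / 2) - a * exp (-x ^ 2 / 2))) x := by
    rcases le_or_gt x a with h | h
    · simp [h]
    · simp [h, max_eq_left (sub_nonneg.2 h.le), gaussianPDFReal]; ring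
  simp_rw [integral_gaussianReal_eq_integral_smul one_ne_zero, hind]
  rw [integral_indicator measurableSet_Ioi, integral_const_mul, integral_sub
    integrable_mul_exp_neg_sq_div_two.integrableOn
    (integrable_exp_neg_sq_div_two.const_mul a).integrableOn, integral_const_mul,
    integral_Ioi_mul_exp_neg_sq_div_two]

-- Degree-6 Taylor polynomial of `exp` at `0`, minus the remainder bound of `Real.exp_bound` for
-- `n = 7`, which for `y ≤ 0` is `-y ^ 7 * 8 / (7! * 7) = -y ^ 7 / 4410`.
theorem taylor_le_exp {y : ℝ} (hy₀ : -1 ≤ y) (hy₁ : y ≤ 0) :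
    1 + y + y ^ 2 / 2 + y ^ 3 / 6 + y ^ 4 / 24 + y ^ 5 / 120 + y ^ 6 / 720 + y ^ 7 / 4410
      ≤ exp y := by
  have h := (abs_le.1 (Real.exp_bound (abs_le.2 ⟨hy₀, by linarith⟩) (n := 7) (by norm_num))).1
  rw [abs_of_nonpos hy₁] at h
  norm_num [Finset.sum_range_succ, Nat.factorial] at h
  linarith

theorem exp_neg_half_ge_d5 : 0.60653 ≤ exp (-1 / 2) := by
  have := taylor_le_exp (y := -1 / 2) (by norm_num) (by norm_num)
  norm_num at this
  linarith

theorem integral_exp_neg_sq_div_two_ge_d5 : 0.85561 ≤ ∫ x in 0..1, exp (-x ^ 2 / 2) := by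
  set p : ℝ → ℝ := fun y =>
    1 + y + y ^ 2 / 2 + y ^ 3 / 6 + y ^ 4 / 24 + y ^ 5 / 120 + y ^ 6 / 720 + y ^ 7 / 4410
  calc 0.85561 ≤ ∫ x in (0 : ℝ)..1, p (-x ^ 2 / 2) := by
        simp only [p]
        ring_nf
        simp (disch := exact (by fun_prop : Continuous _).intervalIntegrable _ _) only
          [intervalIntegral.integral_add, intervalIntegral.integral_mul_const, integral_pow,
            intervalIntegral.integral_const]
        norm_num
    _ ≤ ∫ x in (0 : ℝ)..1, exp (-x ^ 2 / 2) := by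
        refine intervalIntegral.integral_mono_on zero_le_one
          ((by fun_prop : Continuous fun x : ℝ => p (-x ^ 2 / 2)).intervalIntegrable _ _)
          ((by fun_prop : Continuous fun x : ℝ => exp (-x ^ 2 / 2)).intervalIntegrable _ _)
          fun x ⟨hx₀, hx₁⟩ => taylor_le_exp (by nlinarith) (by nlinarith)

theorem sqrt_two_pi_le_d6 : √(2 * π) ≤ 2.506629 := by
  rw [Real.sqrt_le_iff]
  constructor
  · norm_num
  · nlinarith [pi_lt_d6]

theorem integral_max_sub_one_gaussianReal_ge : 0.0833 ≤ ∫ x, max (x - 1) 0 ∂gaussianReal 0 1 := by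
  have hs : 0 < √(2 * π) := by positivity
  rw [integral_max_sub_gaussianReal, integral_Ioi_exp_neg_sq_div_two, le_inv_mul_iff₀ hs]
  simp only [one_pow, one_mul]
  linarith [exp_neg_half_ge_d5, integral_exp_neg_sq_div_two_ge_d5, sqrt_two_pi_le_d6]

theorem stmt17_general (t l : ℝ) (hl : |l| ≤ t) :
    0.1666 * t ≤ ∫ x, (|l + t * x| - |l|) ∂ gaussianReal 0 1 := by
  wlog hl₀ : 0 ≤ l generalizing l
  · rw [← integral_comp_neg_gaussianReal]
    convert this (-l) (by rwa [abs_neg]) (by linarith) using 3 with x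
    rw [abs_neg, ← abs_neg (l + _)]
    ring_nf
  calc 0.1666 * t ≤ 2 * t * ∫ x, max (x - 1) 0 ∂gaussianReal 0 1 := by
        nlinarith [integral_max_sub_one_gaussianReal_ge, abs_nonneg l]
    _ = 2 * t * ∫ x, max (-(1 + x)) 0 ∂gaussianReal 0 1 := by
        rw [← integral_comp_neg_gaussianReal]; ring_nf
    _ ≤ _ := integral_abs_add_mul_sub_abs_ge IsGaussian.integrable_id integral_id_gaussianReal
        hl₀ ((le_abs_self l).trans hl)

/-- For `X ~ N(0,1)`, `t > 0` and `|l| ≤ t`,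
`E[|l + tX| - |l|] ≥ 0.1666·t`. -/
theorem stmt17 (t l : ℝ) (ht : 0 < t) (hl : |l| ≤ t) :
    0.1666 * t ≤ ∫ x, (|l + t * x| - |l|) ∂ gaussianReal 0 1 :=
  stmt17_general t l hl
end
end
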